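/- arXiv:1910.09436 — 7 statements merged into one kernel-verified Lean document; each statement's English description precedes it below -/
import Mathlib

section
/- For all complex numbers z1, z2, the absolute value of the imaginary part of (z2·ln|z2|² − z1·ln|z1|²)·(conj(z2) − conj(z1)) is at most 2·|z2 − z1|², where by convention z·ln|z|² = 0 when z = 0. -/
/-!
Expanding the product, the real parts `‖z₂‖² ln‖z₂‖²` and `‖z₁‖² ln‖z₁‖²` drop out of the
imaginary part, which becomes `Im(z₂ z̄₁) · (ln‖z₁‖² − ln‖z₂‖²)`. If `‖z₁‖ ≤ ‖z₂‖`, then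
`|Im(z₂ z̄₁)| = |Im((z₂ − z₁) z̄₁)| ≤ ‖z₂ − z₁‖ ‖z₁‖`, while `ln x ≤ x − 1` gives
`‖z₁‖ ln(‖z₂‖²/‖z₁‖²) ≤ 2(‖z₂‖ − ‖z₁‖) ≤ 2‖z₂ − z₁‖`.
-/

open ComplexConjugate

lemma Complex.im_mul_ofReal_sub_mul_ofReal_mul_conj_sub (z w : ℂ) (a b : ℝ) :
    ((z * a - w * b) * (conj z - conj w)).im = (z * conj w).im * (b - a) := by
  simp only [mul_im, mul_re, sub_im, sub_re, conj_re, conj_im, ofReal_re, ofReal_im]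
  ring

lemma Complex.abs_im_mul_conj_le (z w : ℂ) : |(z * conj w).im| ≤ ‖z - w‖ * ‖w‖ := by
  have h : (z * conj w).im = ((z - w) * conj w).im := by
    simp only [mul_im, sub_re, sub_im, conj_re, conj_im]
    ring
  rw [h, ← norm_conj w, ← norm_mul]
  exact abs_im_le_norm _

lemma Real.mul_abs_log_sq_sub_log_sq_le {a b : ℝ} (ha : 0 ≤ a) (hab : a ≤ b) :
    a * |log (a ^ 2) - log (b ^ 2)| ≤ 2 * (b - a) := by
  rcases ha.eq_or_lt with rfl | ha
  · simp only [zero_mul]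
    linarith
  have hb : 0 < b := ha.trans_le hab
  have hlog : log (b / a) ≤ b / a - 1 := log_le_sub_one_of_pos (div_pos hb ha)
  rw [log_div hb.ne' ha.ne'] at hlog
  rw [log_pow, log_pow, abs_of_nonpos (by push_cast; linarith [log_le_log ha hab])]
  calc a * -(2 * log a - 2 * log b) = 2 * (a * (log b - log a)) := by ring
    _ ≤ 2 * (a * (b / a - 1)) := by gcongr
    _ = 2 * (b - a) := by field_simp

/-- Cazenave–Haraux logarithmic inequality:
`|Im((z₂ ln|z₂|² − z₁ ln|z₁|²)(conj z₂ − conj z₁))| ≤ 2|z₂ − z₁|²`. -/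
theorem stmt_0 (z1 z2 : ℂ) :
    |((z2 * (Real.log (‖z2‖ ^ 2) : ℂ) - z1 * (Real.log (‖z1‖ ^ 2) : ℂ)) *
        (starRingEnd ℂ z2 - starRingEnd ℂ z1)).im| ≤ 2 * ‖z2 - z1‖ ^ 2 := by
  wlog h : ‖z1‖ ≤ ‖z2‖ generalizing z1 z2
  · have := this z2 z1 (le_of_not_ge h)
    rwa [norm_sub_rev, ← neg_sub, ← neg_sub (starRingEnd ℂ z2), neg_mul_neg] at this
  have hnorm : ‖z2‖ - ‖z1‖ ≤ ‖z2 - z1‖ := norm_sub_norm_le z2 z1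
  rw [Complex.im_mul_ofReal_sub_mul_ofReal_mul_conj_sub, abs_mul]
  calc |(z2 * conj z1).im| * |Real.log (‖z1‖ ^ 2) - Real.log (‖z2‖ ^ 2)|
      ≤ ‖z2 - z1‖ * (‖z1‖ * |Real.log (‖z1‖ ^ 2) - Real.log (‖z2‖ ^ 2)|) := by
        rw [← mul_assoc]
        gcongr
        exact Complex.abs_im_mul_conj_le z2 z1
    _ ≤ ‖z2 - z1‖ * (2 * (‖z2‖ - ‖z1‖)) := by
        gcongr ‖z2 - z1‖ * ?_
        exact Real.mul_abs_log_sq_sub_log_sq_le (norm_nonneg z1) h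
    _ ≤ 2 * ‖z2 - z1‖ ^ 2 := by nlinarith [norm_nonneg (z2 - z1)]
end

section
/- For all real numbers a ∈ (0,1] and δ ≥ 0 with a − δ ≥ −1, one has (a − δ)·ln|a − δ| − a·ln a ≤ δ·(1 − ln a), where by convention t·ln|t| = 0 at t = 0. -/
/-!
With `t = a - δ ≤ a` the claim reads `t ln|t| ≤ t ln a + (a - t)`. For `t > 0` this holds since
`ln t ≤ ln a`; for `t < 0`, the inequality `ln x ≤ x - 1` at `x = a / (-t)` gives the sharper
`t ln|t| ≤ t ln a + (a + t)`.
-/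

open Real

lemma mul_log_abs_le_mul_log_add_sub {a t : ℝ} (ha : 0 < a) (hta : t ≤ a) :
    t * log |t| ≤ t * log a + (a - t) := by
  rcases lt_trichotomy t 0 with hneg | rfl | hpos
  · have hs : 0 < -t := neg_pos.mpr hneg
    have key : -t * log (a / -t) ≤ -t * (a / -t - 1) :=
      mul_le_mul_of_nonneg_left (log_le_sub_one_of_pos (div_pos ha hs)) hs.le
    rw [log_div ha.ne' hs.ne', mul_sub (-t) (a / -t) 1, mul_div_cancel₀ a hs.ne'] at key
    rw [abs_of_neg hneg]
    linarith
  · simpa using ha.le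
  · have key : t * log t ≤ t * log a := mul_le_mul_of_nonneg_left (log_le_log hpos hta) hpos.le
    rw [abs_of_pos hpos]
    linarith

theorem stmt_1_general (a δ : ℝ) (ha : 0 < a) (hδ : 0 ≤ δ) :
    (a - δ) * Real.log |a - δ| - a * Real.log a ≤ δ * (1 - Real.log a) := by
  have key := mul_log_abs_le_mul_log_add_sub ha (sub_le_self a hδ)
  linear_combination key

/-- For `a ∈ (0,1]`, `δ ≥ 0` with `a − δ ≥ −1`:
`(a − δ) ln|a − δ| − a ln a ≤ δ (1 − ln a)`. -/
theorem stmt_1 (a δ : ℝ) (ha : 0 < a) (ha1 : a ≤ 1) (hδ : 0 ≤ δ) (h : -1 ≤ a - δ) :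
    (a - δ) * Real.log |a - δ| - a * Real.log a ≤ δ * (1 - Real.log a) :=
  stmt_1_general a δ ha hδ
end

section
/- For each dimension d ≥ 1 there exists a constant C_d > 0 such that for all γ > 0, R > 0 and x₀ ∈ ℝ^d with R ≥ γ^{-1/2} and |x₀| ≤ 2R, the integral over ℝ^d minus the ball B(0,R) of |x − x₀|⁴·exp(−γ|x|²) dx is at most C_d·(R^{d+2}/γ)·exp(−γR²). -/
open MeasureTheory Set



lemma aux_int1d (k : ℕ) {c : ℝ} (hc : 0 < c) :
    IntegrableOn (fun u : ℝ => u ^ k * Real.exp (-(c * u))) (Ioi 0) := by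
  have h := integrableOn_rpow_mul_exp_neg_mul_rpow (p := 1) (s := (k : ℝ))
    (by have : (0:ℝ) ≤ (k:ℝ) := Nat.cast_nonneg k; linarith) one_pos hc
  refine h.congr_fun ?_ measurableSet_Ioi
  intro x hx
  simp [Real.rpow_natCast, Real.rpow_one, neg_mul]

lemma aux_val1d (k : ℕ) {c : ℝ} (hc : 0 < c) :
    ∫ u in Ioi (0:ℝ), u ^ k * Real.exp (-(c * u)) = k.factorial / c ^ (k + 1) := by
  have h := Real.integral_rpow_mul_exp_neg_mul_Ioi (a := (k : ℝ) + 1) (by positivity) hc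
  have h2 : ∫ t in Ioi (0:ℝ), t ^ (((k : ℝ) + 1) - 1) * Real.exp (-(c * t))
      = ∫ u in Ioi (0:ℝ), u ^ k * Real.exp (-(c * u)) := by
    refine setIntegral_congr_fun measurableSet_Ioi fun t ht => ?_
    rw [show ((k : ℝ) + 1) - 1 = (k : ℝ) by ring, Real.rpow_natCast]
  rw [h2] at h
  rw [h, Real.Gamma_nat_eq_factorial, show ((k : ℝ) + 1) = ((k + 1 : ℕ) : ℝ) by push_cast; ring,
    Real.rpow_natCast]
  rw [div_pow, one_pow]
  ring

lemma aux_gauss_int {d : ℕ} {b : ℝ} (hb : 0 < b) :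
    Integrable (fun x : EuclideanSpace ℝ (Fin d) => Real.exp (-b * ‖x‖ ^ 2)) := by
  have h := (GaussianFourier.integrable_cexp_neg_mul_sq_norm_add (b := (b:ℂ))
    (by simpa using hb) 0 (0 : EuclideanSpace ℝ (Fin d))).norm
  refine h.congr (Filter.Eventually.of_forall fun x => ?_)
  simp only [Complex.norm_exp, zero_mul, add_zero]
  rw [show (-(b:ℂ)) * ((‖x‖:ℂ))^2 = ((-b * ‖x‖^2 : ℝ) : ℂ) by push_cast; ring,
    Complex.ofReal_re]

lemma aux_poly_gauss_int {d : ℕ} {b : ℝ} (hb : 0 < b) :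
    Integrable (fun x : EuclideanSpace ℝ (Fin d) => ‖x‖ ^ 4 * Real.exp (-b * ‖x‖ ^ 2)) := by
  refine Integrable.mono' ((aux_gauss_int (d := d) (half_pos hb)).const_mul (16 / b ^ 2))
    ?_ (Filter.Eventually.of_forall fun x => ?_)
  · exact ((continuous_norm.pow 4).mul
      (Real.continuous_exp.comp (continuous_const.mul (continuous_norm.pow 2)))).aestronglyMeasurable
  · set r := ‖x‖ with hrdef
    have hr : 0 ≤ r := norm_nonneg x
    have h1 : b / 4 * r ^ 2 ≤ Real.exp (b / 4 * r ^ 2) := by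
      linarith [Real.add_one_le_exp (b / 4 * r ^ 2)]
    have h2 : (b / 4 * r ^ 2) ^ 2 ≤ (Real.exp (b / 4 * r ^ 2)) ^ 2 :=
      pow_le_pow_left₀ (by positivity) h1 2
    have h3 : (Real.exp (b / 4 * r ^ 2)) ^ 2 = Real.exp (b / 2 * r ^ 2) := by
      rw [← Real.exp_nat_mul]; congr 1; push_cast; ring
    have key : r ^ 4 ≤ 16 / b ^ 2 * Real.exp (b / 2 * r ^ 2) := by
      have h4 := mul_le_mul_of_nonneg_left h2 (by positivity : (0:ℝ) ≤ 16 / b ^ 2)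
      have heq : 16 / b ^ 2 * (b / 4 * r ^ 2) ^ 2 = r ^ 4 := by
        field_simp; ring
      rw [heq, h3] at h4
      exact h4
    have hpos := Real.exp_pos (-(b / 2) * r ^ 2)
    have hE : Real.exp (b / 2 * r ^ 2) * Real.exp (-(b / 2) * r ^ 2) = 1 := by
      rw [← Real.exp_add, show b / 2 * r ^ 2 + -(b / 2) * r ^ 2 = 0 by ring, Real.exp_zero]
    have h5 : r ^ 4 * Real.exp (-(b / 2) * r ^ 2) ≤ 16 / b ^ 2 :=
      calc r ^ 4 * Real.exp (-(b / 2) * r ^ 2)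
          ≤ 16 / b ^ 2 * Real.exp (b / 2 * r ^ 2) * Real.exp (-(b / 2) * r ^ 2) :=
            mul_le_mul_of_nonneg_right key hpos.le
        _ = 16 / b ^ 2 := by rw [mul_assoc, hE, mul_one]
    have hsplit : Real.exp (-b * r ^ 2)
        = Real.exp (-(b / 2) * r ^ 2) * Real.exp (-(b / 2) * r ^ 2) := by
      rw [← Real.exp_add]; congr 1; ring
    have hmain : r ^ 4 * Real.exp (-b * r ^ 2) ≤ 16 / b ^ 2 * Real.exp (-(b / 2) * r ^ 2) := by
      rw [hsplit, ← mul_assoc]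
      exact mul_le_mul_of_nonneg_right h5 hpos.le
    calc ‖r ^ 4 * Real.exp (-b * r ^ 2)‖ = r ^ 4 * Real.exp (-b * r ^ 2) := by
          rw [Real.norm_eq_abs, abs_of_nonneg (by positivity)]
      _ ≤ 16 / b ^ 2 * Real.exp (-(b / 2) * r ^ 2) := hmain


/-- For each `d ≥ 1` there is `C_d > 0` such that for `γ > 0`, `R ≥ γ^{-1/2}`,
`|x₀| ≤ 2R`, `∫_{ℝ^d ∖ B(0,R)} |x−x₀|⁴ e^{−γ|x|²} dx ≤ C_d (R^{d+2}/γ) e^{−γ R²}`. -/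
theorem stmt_6 (d : ℕ) (hd : 1 ≤ d) :
    ∃ C : ℝ, 0 < C ∧ ∀ γ R : ℝ, ∀ x₀ : EuclideanSpace ℝ (Fin d),
      0 < γ → 0 < R → γ ^ (-(1:ℝ)/2) ≤ R → ‖x₀‖ ≤ 2 * R →
      ∫ x in (Metric.ball (0 : EuclideanSpace ℝ (Fin d)) R)ᶜ,
          ‖x - x₀‖ ^ 4 * Real.exp (-γ * ‖x‖ ^ 2) ≤
        C * (R ^ ((d : ℝ) + 2) / γ) * Real.exp (-γ * R ^ 2) := by
  classical
  haveI : Nonempty (Fin d) := ⟨⟨0, hd⟩⟩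
  haveI : Nontrivial (EuclideanSpace ℝ (Fin d)) := by
    unfold EuclideanSpace PiLp
    infer_instance
  set B := (volume (Metric.ball (0 : EuclideanSpace ℝ (Fin d)) 1)).toReal with hBdef
  have hBpos : 0 < B := by
    refine ENNReal.toReal_pos (ne_of_gt (Metric.measure_ball_pos _ _ one_pos)) ?_
    exact (measure_ball_lt_top).ne
  refine ⟨d * B * 81 * 2 ^ (d + 3) * ((d + 3).factorial + 1) + 1, by positivity, ?_⟩
  intro γ R x₀ hγ hR hRγ hx₀
  -- basic facts
  have hγR2 : 1 ≤ γ * R ^ 2 := by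
    have h1 : (0:ℝ) < γ ^ (-(1:ℝ)/2) := Real.rpow_pos_of_pos hγ _
    have h2 : (γ ^ (-(1:ℝ)/2)) ^ 2 ≤ R ^ 2 := pow_le_pow_left₀ h1.le hRγ 2
    have h3 : (γ ^ (-(1:ℝ)/2)) ^ 2 = γ⁻¹ := by
      rw [← Real.rpow_natCast (γ ^ (-(1:ℝ)/2)) 2, ← Real.rpow_mul hγ.le]
      norm_num
      exact Real.rpow_neg_one γ
    rw [h3] at h2
    calc (1:ℝ) = γ * γ⁻¹ := (mul_inv_cancel₀ hγ.ne').symm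
      _ ≤ γ * R ^ 2 := mul_le_mul_of_nonneg_left h2 hγ.le
  have hc : 0 < 2 * γ * R := by positivity
  set g : EuclideanSpace ℝ (Fin d) → ℝ :=
    fun x => 81 * (‖x‖ ^ 4 * Real.exp (-γ * ‖x‖ ^ 2)) with hgdef
  set g1 : ℝ → ℝ := fun r => 81 * (r ^ 4 * Real.exp (-γ * r ^ 2)) with hg1def
  have hgInt : Integrable g := by
    simpa [hgdef] using (aux_poly_gauss_int (d := d) hγ).const_mul 81
  -- Step 1 : bound integrand by radial function
  have step1 : ∫ x in (Metric.ball (0 : EuclideanSpace ℝ (Fin d)) R)ᶜ,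
      ‖x - x₀‖ ^ 4 * Real.exp (-γ * ‖x‖ ^ 2)
      ≤ ∫ x in (Metric.ball (0 : EuclideanSpace ℝ (Fin d)) R)ᶜ, g x := by
    apply integral_mono_of_nonneg
    · filter_upwards with x
      positivity
    · exact hgInt.restrict
    · refine (ae_restrict_iff' measurableSet_ball.compl).2 ?_
      filter_upwards with x hx
      have hxn : R ≤ ‖x‖ := by
        simpa [Metric.mem_ball, dist_zero_right, not_lt] using hx
      have h1 : ‖x - x₀‖ ≤ 3 * ‖x‖ := by
        calc ‖x - x₀‖ ≤ ‖x‖ + ‖x₀‖ := norm_sub_le _ _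
          _ ≤ 3 * ‖x‖ := by linarith
      calc ‖x - x₀‖ ^ 4 * Real.exp (-γ * ‖x‖ ^ 2)
          ≤ (3 * ‖x‖) ^ 4 * Real.exp (-γ * ‖x‖ ^ 2) :=
            mul_le_mul_of_nonneg_right (pow_le_pow_left₀ (norm_nonneg _) h1 4)
              (Real.exp_pos _).le
        _ = g x := by rw [hgdef]; ring
  -- Step 2 : polar coordinates
  have polar : ∫ x in (Metric.ball (0 : EuclideanSpace ℝ (Fin d)) R)ᶜ, g x
      = d * (B * ∫ r in Ioi R, r ^ (d - 1) * g1 r) := by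
    rw [← integral_indicator measurableSet_ball.compl]
    have hind : ∀ x : EuclideanSpace ℝ (Fin d),
        ((Metric.ball (0 : EuclideanSpace ℝ (Fin d)) R)ᶜ).indicator g x
        = (Ici R).indicator g1 ‖x‖ := by
      intro x
      by_cases hx : R ≤ ‖x‖
      · rw [Set.indicator_of_mem (by simpa [Metric.mem_ball, dist_zero_right, not_lt] using hx),
          Set.indicator_of_mem (show ‖x‖ ∈ Ici R from hx) g1]
      · rw [Set.indicator_of_notMem
          (by simpa [Metric.mem_ball, dist_zero_right, not_lt, not_le] using hx),
          Set.indicator_of_notMem (show ‖x‖ ∉ Ici R from hx) g1]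
    simp_rw [hind]
    rw [integral_fun_norm_addHaar volume ((Ici R).indicator g1)]
    rw [finrank_euclideanSpace_fin]
    rw [nsmul_eq_mul, smul_eq_mul]
    congr 2
    simp_rw [smul_eq_mul]
    have hind2 : ∀ y : ℝ, y ^ (d - 1) * (Ici R).indicator g1 y
        = (Ici R).indicator (fun r => r ^ (d - 1) * g1 r) y := by
      intro y
      by_cases hy : y ∈ Ici R
      · rw [Set.indicator_of_mem hy, Set.indicator_of_mem hy]
      · rw [Set.indicator_of_notMem hy, Set.indicator_of_notMem hy, mul_zero]
    simp_rw [hind2]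
    rw [setIntegral_indicator measurableSet_Ici]
    rw [show Ioi (0:ℝ) ∩ Ici R = Ici R from
      inter_eq_self_of_subset_right (fun y hy => lt_of_lt_of_le hR hy)]
    exact integral_Ici_eq_integral_Ioi
  -- Step 3 : rewrite integrand
  have step3 : ∫ r in Ioi R, r ^ (d - 1) * g1 r
      = 81 * ∫ r in Ioi R, r ^ (d + 3) * Real.exp (-γ * r ^ 2) := by
    rw [← integral_const_mul]
    refine setIntegral_congr_fun measurableSet_Ioi fun r hr => ?_
    have : r ^ (d - 1) * r ^ 4 = r ^ (d + 3) := by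
      rw [← pow_add]
      congr 1
      omega
    rw [hg1def]
    simp only []
    rw [show r ^ (d-1) * (81 * (r ^ 4 * Real.exp (-γ * r ^ 2)))
      = 81 * ((r ^ (d-1) * r ^ 4) * Real.exp (-γ * r ^ 2)) by ring, this]
  -- Step 4 : shift
  have shift : ∫ r in Ioi R, r ^ (d + 3) * Real.exp (-γ * r ^ 2)
      = ∫ u in Ioi (0:ℝ), (u + R) ^ (d + 3) * Real.exp (-γ * (u + R) ^ 2) := by
    rw [← integral_indicator measurableSet_Ioi, ← integral_indicator measurableSet_Ioi,
      ← integral_add_right_eq_self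
        (fun r => (Ioi R).indicator (fun r => r ^ (d + 3) * Real.exp (-γ * r ^ 2)) r) R]
    congr 1
    funext u
    by_cases hu : 0 < u
    · simp [Set.indicator_apply, mem_Ioi, hu, lt_add_iff_pos_left]
    · simp [Set.indicator_apply, mem_Ioi, hu, lt_add_iff_pos_left]
  -- Step 5 : bound after shift
  have step5 : ∫ u in Ioi (0:ℝ), (u + R) ^ (d + 3) * Real.exp (-γ * (u + R) ^ 2)
      ≤ ∫ u in Ioi (0:ℝ), (2 ^ (d + 3) * (u ^ (d + 3) + R ^ (d + 3)))
          * (Real.exp (-γ * R ^ 2) * Real.exp (-(2 * γ * R * u))) := by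
    apply integral_mono_of_nonneg
    · refine (ae_restrict_iff' measurableSet_Ioi).2 ?_
      filter_upwards with u hu
      have hu' : 0 < u + R := by have : 0 < u := hu; linarith
      positivity
    · have i1 := (aux_int1d (d + 3) hc).const_mul (2 ^ (d + 3) * Real.exp (-γ * R ^ 2))
      have i2 := (aux_int1d 0 hc).const_mul (2 ^ (d + 3) * R ^ (d + 3) * Real.exp (-γ * R ^ 2))
      refine (i1.add i2).congr (Filter.Eventually.of_forall fun u => ?_)
      simp only [Pi.add_apply, pow_zero, one_mul]
      ring
    · refine (ae_restrict_iff' measurableSet_Ioi).2 ?_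
      filter_upwards with u hu
      have hu' : (0:ℝ) < u := hu
      have hb1 : (u + R) ^ (d + 3) ≤ 2 ^ (d + 3) * (u ^ (d + 3) + R ^ (d + 3)) := by
        have hmax : u + R ≤ 2 * max u R := by
          have h1 : u ≤ max u R := le_max_left _ _
          have h2 : R ≤ max u R := le_max_right _ _
          linarith
        have h3 : (u + R) ^ (d + 3) ≤ (2 * max u R) ^ (d + 3) :=
          pow_le_pow_left₀ (by linarith) hmax _
        have h4 : (2 * max u R) ^ (d + 3) = 2 ^ (d + 3) * (max u R) ^ (d + 3) := mul_pow _ _ _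
        have h5 : (max u R) ^ (d + 3) ≤ u ^ (d + 3) + R ^ (d + 3) := by
          rcases le_total u R with h | h
          · rw [max_eq_right h]
            exact le_add_of_nonneg_left (by positivity)
          · rw [max_eq_left h]
            exact le_add_of_nonneg_right (by positivity)
        calc (u + R) ^ (d + 3) ≤ 2 ^ (d + 3) * (max u R) ^ (d + 3) := by rw [← h4]; exact h3
          _ ≤ 2 ^ (d + 3) * (u ^ (d + 3) + R ^ (d + 3)) :=
            mul_le_mul_of_nonneg_left h5 (by positivity)
      have hb2 : Real.exp (-γ * (u + R) ^ 2)
          ≤ Real.exp (-γ * R ^ 2) * Real.exp (-(2 * γ * R * u)) := by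
        rw [← Real.exp_add]
        apply Real.exp_le_exp.2
        nlinarith [mul_nonneg hγ.le (sq_nonneg u)]
      exact mul_le_mul hb1 hb2 (Real.exp_pos _).le (by positivity)
  -- Step 6 : value of the dominating integral
  have step6 : ∫ u in Ioi (0:ℝ), (2 ^ (d + 3) * (u ^ (d + 3) + R ^ (d + 3)))
          * (Real.exp (-γ * R ^ 2) * Real.exp (-(2 * γ * R * u)))
      = 2 ^ (d + 3) * Real.exp (-γ * R ^ 2)
          * ((d + 3).factorial / (2 * γ * R) ^ (d + 4) + R ^ (d + 3) / (2 * γ * R)) := by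
    have i1 := (aux_int1d (d + 3) hc).const_mul (2 ^ (d + 3) * Real.exp (-γ * R ^ 2))
    have i2 := (aux_int1d 0 hc).const_mul (2 ^ (d + 3) * R ^ (d + 3) * Real.exp (-γ * R ^ 2))
    have heq : ∀ u : ℝ, (2 ^ (d + 3) * (u ^ (d + 3) + R ^ (d + 3)))
          * (Real.exp (-γ * R ^ 2) * Real.exp (-(2 * γ * R * u)))
        = (2 ^ (d + 3) * Real.exp (-γ * R ^ 2)) * (u ^ (d + 3) * Real.exp (-(2 * γ * R * u)))
          + (2 ^ (d + 3) * R ^ (d + 3) * Real.exp (-γ * R ^ 2))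
            * (u ^ 0 * Real.exp (-(2 * γ * R * u))) := by
      intro u
      simp only [pow_zero, one_mul]
      ring
    simp_rw [heq]
    rw [integral_add i1 i2, integral_const_mul, integral_const_mul,
      aux_val1d (d + 3) hc, aux_val1d 0 hc]
    simp only [Nat.factorial_zero, Nat.cast_one, pow_one]
    rw [show d + 3 + 1 = d + 4 from rfl]
    ring
  -- Step 7 : final arithmetic
  have hX : (0:ℝ) ≤ R ^ (d + 2) / γ := by positivity
  have ar1 : ((d + 3).factorial : ℝ) / (2 * γ * R) ^ (d + 4)
      ≤ ((d + 3).factorial : ℝ) * (R ^ (d + 2) / γ) := by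
    have h1 : (1:ℝ) ≤ (γ * R ^ 2) ^ (d + 3) := one_le_pow₀ hγR2
    have h2pow : (1:ℝ) ≤ (2:ℝ) ^ (d + 4) := one_le_pow₀ one_le_two
    have keyeq : γ * ((γ * R ^ 2) ^ (d + 3) * 2 ^ (d + 4))
        = R ^ (d + 2) * (2 * γ * R) ^ (d + 4) := by
      rw [mul_pow, mul_pow, mul_pow, ← pow_mul,
        show 2 * (d + 3) = (d + 2) + (d + 4) by omega, pow_add,
        show d + 4 = (d + 3) + 1 from rfl, pow_succ γ (d + 3)]
      ring
    have key : γ ≤ R ^ (d + 2) * (2 * γ * R) ^ (d + 4) := by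
      have h3 : (1:ℝ) ≤ (γ * R ^ 2) ^ (d + 3) * 2 ^ (d + 4) :=
        le_trans h1 (le_mul_of_one_le_right (by positivity) h2pow)
      calc γ = γ * 1 := (mul_one γ).symm
        _ ≤ γ * ((γ * R ^ 2) ^ (d + 3) * 2 ^ (d + 4)) :=
          mul_le_mul_of_nonneg_left h3 hγ.le
        _ = R ^ (d + 2) * (2 * γ * R) ^ (d + 4) := keyeq
    have hdiv : 1 / (2 * γ * R) ^ (d + 4) ≤ R ^ (d + 2) / γ := by
      rw [div_le_div_iff₀ (by positivity) hγ]
      linarith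
    calc ((d + 3).factorial : ℝ) / (2 * γ * R) ^ (d + 4)
        = ((d + 3).factorial : ℝ) * (1 / (2 * γ * R) ^ (d + 4)) := by ring
      _ ≤ ((d + 3).factorial : ℝ) * (R ^ (d + 2) / γ) :=
        mul_le_mul_of_nonneg_left hdiv (Nat.cast_nonneg _)
  have ar2 : R ^ (d + 3) / (2 * γ * R) ≤ R ^ (d + 2) / γ := by
    have heq2 : R ^ (d + 3) / (2 * γ * R) = R ^ (d + 2) / (2 * γ) := by
      rw [pow_succ]
      exact mul_div_mul_right _ _ hR.ne'
    rw [heq2]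
    apply div_le_div_of_nonneg_left (by positivity) hγ (by linarith)
  have hsum : ((d + 3).factorial : ℝ) / (2 * γ * R) ^ (d + 4) + R ^ (d + 3) / (2 * γ * R)
      ≤ (((d + 3).factorial : ℝ) + 1) * (R ^ (d + 2) / γ) := by
    rw [add_mul, one_mul]
    exact add_le_add ar1 ar2
  have hrpow : R ^ ((d : ℝ) + 2) = R ^ (d + 2) := by
    rw [show ((d : ℝ) + 2) = ((d + 2 : ℕ) : ℝ) by push_cast; ring, Real.rpow_natCast]
  rw [hrpow]
  have hexp : (0:ℝ) < Real.exp (-γ * R ^ 2) := Real.exp_pos _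
  calc ∫ x in (Metric.ball (0 : EuclideanSpace ℝ (Fin d)) R)ᶜ,
        ‖x - x₀‖ ^ 4 * Real.exp (-γ * ‖x‖ ^ 2)
      ≤ ∫ x in (Metric.ball (0 : EuclideanSpace ℝ (Fin d)) R)ᶜ, g x := step1
    _ = d * (B * (81 * ∫ r in Ioi R, r ^ (d + 3) * Real.exp (-γ * r ^ 2))) := by
        rw [polar, step3]
    _ = d * (B * (81 * ∫ u in Ioi (0:ℝ), (u + R) ^ (d + 3) * Real.exp (-γ * (u + R) ^ 2))) := by
        rw [shift]
    _ ≤ d * (B * (81 * (2 ^ (d + 3) * Real.exp (-γ * R ^ 2)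
          * (((d + 3).factorial : ℝ) / (2 * γ * R) ^ (d + 4) + R ^ (d + 3) / (2 * γ * R))))) := by
        have := le_trans step5 (le_of_eq step6)
        have hd0 : (0:ℝ) ≤ d * B := by positivity
        gcongr
    _ = (d * B * 81 * 2 ^ (d + 3) * Real.exp (-γ * R ^ 2))
          * (((d + 3).factorial : ℝ) / (2 * γ * R) ^ (d + 4) + R ^ (d + 3) / (2 * γ * R)) := by
        ring
    _ ≤ (d * B * 81 * 2 ^ (d + 3) * Real.exp (-γ * R ^ 2))
          * ((((d + 3).factorial : ℝ) + 1) * (R ^ (d + 2) / γ)) :=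
        mul_le_mul_of_nonneg_left hsum (by positivity)
    _ = (d * B * 81 * 2 ^ (d + 3) * (((d + 3).factorial : ℝ) + 1))
          * (R ^ (d + 2) / γ) * Real.exp (-γ * R ^ 2) := by ring
    _ ≤ (d * B * 81 * 2 ^ (d + 3) * (((d + 3).factorial : ℝ) + 1) + 1)
          * (R ^ (d + 2) / γ) * Real.exp (-γ * R ^ 2) := by
        gcongr
        linarith
    _ = (↑d * B * 81 * 2 ^ (d + 3) * (↑(d + 3).factorial + 1) + 1)
          * (R ^ (d + 2) / γ) * Real.exp (-γ * R ^ 2) := by norm_num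
end

section
/- Let γ_r > 0, γ_i ∈ ℝ, set E_γ := γ_i² + 1/γ_r² + 2·ln γ_r, and let τ be a positive solution on an interval I (containing 0) of τ'' = 1/τ³ − 1/τ with τ(0) = γ_r, τ'(0) = γ_i. Then E_γ ≥ 1 and for all t ∈ I, 1/(1 + √(E_γ − 1)) ≤ τ(t) ≤ exp(E_γ/2). -/
/-- A priori bounds for solutions of `τ'' = 1/τ³ − 1/τ`: with
`E_γ = γᵢ² + 1/γᵣ² + 2 ln γᵣ`, one has `E_γ ≥ 1` and
`1/(1 + √(E_γ − 1)) ≤ τ(t) ≤ e^{E_γ/2}`. -/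
theorem stmt_9 (γr γi : ℝ) (hγr : 0 < γr) (I : Set ℝ) (hI : Convex ℝ I) (h0 : (0:ℝ) ∈ I)
    (τ τ' : ℝ → ℝ)
    (hτpos : ∀ t ∈ I, 0 < τ t)
    (hτ : ∀ t ∈ I, HasDerivWithinAt τ (τ' t) I t)
    (hτ' : ∀ t ∈ I, HasDerivWithinAt τ' (1 / (τ t) ^ 3 - 1 / τ t) I t)
    (hinit : τ 0 = γr) (hinit' : τ' 0 = γi) :
    1 ≤ γi ^ 2 + 1 / γr ^ 2 + 2 * Real.log γr ∧
    ∀ t ∈ I,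
      1 / (1 + Real.sqrt ((γi ^ 2 + 1 / γr ^ 2 + 2 * Real.log γr) - 1)) ≤ τ t ∧
      τ t ≤ Real.exp ((γi ^ 2 + 1 / γr ^ 2 + 2 * Real.log γr) / 2) := by
  set Eγ : ℝ := γi ^ 2 + 1 / γr ^ 2 + 2 * Real.log γr with hEγ
  -- the energy function
  set E : ℝ → ℝ := fun t => τ' t ^ 2 + 1 / τ t ^ 2 + 2 * Real.log (τ t) with hE
  have hEderiv : ∀ t ∈ I, HasDerivWithinAt E 0 I t := by
    intro t ht
    have hτt := hτpos t ht
    have hτne : τ t ≠ 0 := ne_of_gt hτt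
    have h1 : HasDerivWithinAt (fun s => τ' s ^ 2)
        (2 * τ' t ^ 1 * (1 / τ t ^ 3 - 1 / τ t)) I t := (hτ' t ht).pow 2
    have h2 : HasDerivWithinAt (fun s => (τ s ^ 2)⁻¹)
        (-(2 * τ t ^ 1 * τ' t) / (τ t ^ 2) ^ 2) I t :=
      ((hτ t ht).pow 2).inv (pow_ne_zero 2 hτne)
    have h3 : HasDerivWithinAt (fun s => Real.log (τ s)) (τ' t / τ t) I t :=
      (hτ t ht).log hτne
    have h := (h1.add h2).add (h3.const_mul 2)
    have heq : (fun s => τ' s ^ 2 + (τ s ^ 2)⁻¹ + 2 * Real.log (τ s)) = E := by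
      funext s; simp [hE, one_div]
    change HasDerivWithinAt (fun s => τ' s ^ 2 + (τ s ^ 2)⁻¹ + 2 * Real.log (τ s)) _ I t at h
    rw [heq] at h
    convert h using 1
    field_simp
    ring
  have hconst : ∀ t ∈ I, E t = E 0 := by
    intro t ht
    have := hI.norm_image_sub_le_of_norm_hasDerivWithin_le (C := 0) hEderiv
      (fun x hx => by simp) h0 ht
    simp at this
    have : |E t - E 0| ≤ 0 := by simpa [Real.norm_eq_abs] using this
    have := abs_nonpos_iff.mp (le_trans (le_refl _) this)
    linarith [abs_nonneg (E t - E 0), this]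
  have hE0 : E 0 = Eγ := by simp [hE, hEγ, hinit, hinit']
  -- E γ ≥ 1 using log x ≤ x - 1
  have hlog : Real.log (1 / γr ^ 2) ≤ 1 / γr ^ 2 - 1 :=
    Real.log_le_sub_one_of_pos (by positivity)
  have hlogγr : Real.log (1 / γr ^ 2) = -(2 * Real.log γr) := by
    rw [one_div, Real.log_inv, Real.log_pow]; push_cast; ring
  have hE1 : 1 ≤ Eγ := by
    rw [hlogγr] at hlog
    rw [hEγ]
    nlinarith [sq_nonneg γi]
  refine ⟨hE1, fun t ht => ?_⟩
  have hτt := hτpos t ht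
  have hEt : τ' t ^ 2 + 1 / τ t ^ 2 + 2 * Real.log (τ t) = Eγ := by
    rw [← hE0, ← hconst t ht]
  have hkey : 1 / τ t ^ 2 + 2 * Real.log (τ t) ≤ Eγ := by
    nlinarith [sq_nonneg (τ' t)]
  constructor
  · -- lower bound
    set s := Real.sqrt (Eγ - 1) with hs
    have hs0 : 0 ≤ s := Real.sqrt_nonneg _
    have hs2 : s ^ 2 = Eγ - 1 := Real.sq_sqrt (by linarith)
    -- log τ ≥ 1 - 1/τ
    have hl : Real.log (1 / τ t) ≤ 1 / τ t - 1 :=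
      Real.log_le_sub_one_of_pos (by positivity)
    have hl2 : Real.log (1 / τ t) = -Real.log (τ t) := by
      rw [one_div, Real.log_inv]
    rw [hl2] at hl
    -- (1/τ - 1)² ≤ Eγ - 1 = s²
    have hsq : (1 / τ t - 1) ^ 2 ≤ s ^ 2 := by
      rw [hs2]
      have h1 : (1 / τ t - 1) ^ 2 = 1 / τ t ^ 2 - 2 * (1 / τ t) + 1 := by
        field_simp; ring
      linarith [h1, hkey, hl]
    have hle : 1 / τ t - 1 ≤ s := by nlinarith
    have h1s : 0 < 1 + s := by linarith
    rw [div_le_iff₀ h1s]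
    have : 1 / τ t ≤ 1 + s := by linarith
    rw [div_le_iff₀ hτt] at this
    linarith [mul_comm (τ t) (1 + s)]
  · -- upper bound
    have hlt : Real.log (τ t) ≤ Eγ / 2 := by
      have : 0 ≤ 1 / τ t ^ 2 := by positivity
      linarith
    calc τ t = Real.exp (Real.log (τ t)) := (Real.exp_log hτt).symm
      _ ≤ Real.exp (Eγ / 2) := Real.exp_le_exp.mpr hlt
end

section
/- For E > 1, let γ₋(E) ∈ (0,1) and γ₊(E) ∈ (1,∞) solve 1/q² + 2·ln q = E, and define T(E) := 2·∫_{γ₋(E)}^{γ₊(E)} dx / √(E − 1/x² − 2·ln x). Then T is a continuous function of E on (1,∞). -/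
open Set MeasureTheory intervalIntegral
open scoped Interval

noncomputable def Vf (x : ℝ) : ℝ := 1 / x ^ 2 + 2 * Real.log x

lemma Vf_hasDerivAt {x : ℝ} (hx : 0 < x) :
    HasDerivAt Vf (2 * (x ^ 2 - 1) / x ^ 3) x := by
  have hx0 : x ≠ 0 := ne_of_gt hx
  have h := ((hasDerivAt_pow 2 x).inv (pow_ne_zero 2 hx0)).add
    ((Real.hasDerivAt_log hx0).const_mul 2)
  have hfun : Vf = fun y : ℝ => (y ^ 2)⁻¹ + 2 * Real.log y := by
    funext y; simp [Vf, one_div]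
  rw [hfun]
  refine h.congr_deriv ?_
  field_simp
  ring

lemma Vf_contAt {x : ℝ} (hx : 0 < x) : ContinuousAt Vf x :=
  (Vf_hasDerivAt hx).continuousAt

lemma Vf_deriv {x : ℝ} (hx : 0 < x) : deriv Vf x = 2 * (x ^ 2 - 1) / x ^ 3 :=
  (Vf_hasDerivAt hx).deriv

lemma Vf_mono : StrictMonoOn Vf (Ici 1) := by
  apply strictMonoOn_of_deriv_pos (convex_Ici 1)
  · exact fun x hx => (Vf_contAt (lt_of_lt_of_le one_pos hx)).continuousWithinAt
  · intro x hx
    rw [interior_Ici] at hx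
    have hx1 : (1:ℝ) < x := hx
    rw [Vf_deriv (by linarith)]
    have : (0:ℝ) < x ^ 3 := by positivity
    have : (0:ℝ) < x ^ 2 - 1 := by nlinarith
    positivity

lemma Vf_anti : StrictAntiOn Vf (Ioc 0 1) := by
  apply strictAntiOn_of_deriv_neg (convex_Ioc 0 1)
  · exact fun x hx => (Vf_contAt hx.1).continuousWithinAt
  · intro x hx
    rw [interior_Ioc] at hx
    rw [Vf_deriv hx.1]
    have h3 : (0:ℝ) < x ^ 3 := pow_pos hx.1 3
    have h2 : x ^ 2 - 1 < 0 := by nlinarith [hx.1, hx.2]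
    exact div_neg_of_neg_of_pos (by nlinarith) h3

lemma Vf_one : Vf 1 = 1 := by simp [Vf]

section
variable {γm γp : ℝ → ℝ}

lemma γp_eq (hγp : ∀ E ∈ Set.Ioi (1:ℝ), γp E ∈ Set.Ioi (1:ℝ) ∧
      1 / (γp E) ^ 2 + 2 * Real.log (γp E) = E) {E : ℝ} (hE : E ∈ Set.Ioi (1:ℝ)) :
    Vf (γp E) = E := by simpa [Vf] using (hγp E hE).2

lemma γm_eq (hγm : ∀ E ∈ Set.Ioi (1:ℝ), γm E ∈ Set.Ioo (0:ℝ) 1 ∧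
      1 / (γm E) ^ 2 + 2 * Real.log (γm E) = E) {E : ℝ} (hE : E ∈ Set.Ioi (1:ℝ)) :
    Vf (γm E) = E := by simpa [Vf] using (hγm E hE).2

lemma γp_smono (hγp : ∀ E ∈ Set.Ioi (1:ℝ), γp E ∈ Set.Ioi (1:ℝ) ∧
      1 / (γp E) ^ 2 + 2 * Real.log (γp E) = E) :
    StrictMonoOn γp (Set.Ioi 1) := by
  intro E hE E' hE' h
  by_contra hc
  push_neg at hc
  have h1 := (hγp E hE).1
  have h2 := (hγp E' hE').1
  have : Vf (γp E') ≤ Vf (γp E) :=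
    Vf_mono.monotoneOn (mem_Ici.mpr (le_of_lt h2)) (mem_Ici.mpr (le_of_lt h1)) hc
  rw [γp_eq hγp hE, γp_eq hγp hE'] at this
  linarith

lemma γm_santi (hγm : ∀ E ∈ Set.Ioi (1:ℝ), γm E ∈ Set.Ioo (0:ℝ) 1 ∧
      1 / (γm E) ^ 2 + 2 * Real.log (γm E) = E) :
    StrictAntiOn γm (Set.Ioi 1) := by
  intro E hE E' hE' h
  by_contra hc
  push_neg at hc
  have h1 := (hγm E hE).1
  have h2 := (hγm E' hE').1
  have : Vf (γm E') ≤ Vf (γm E) :=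
    Vf_anti.antitoneOn ⟨h1.1, le_of_lt h1.2⟩ ⟨h2.1, le_of_lt h2.2⟩ hc
  rw [γm_eq hγm hE, γm_eq hγm hE'] at this
  linarith

lemma γp_image (hγp : ∀ E ∈ Set.Ioi (1:ℝ), γp E ∈ Set.Ioi (1:ℝ) ∧
      1 / (γp E) ^ 2 + 2 * Real.log (γp E) = E) :
    γp '' (Set.Ioi 1) = Set.Ioi 1 := by
  apply Set.Subset.antisymm
  · rintro _ ⟨E, hE, rfl⟩; exact (hγp E hE).1
  · intro t ht
    have hVt : Vf t ∈ Set.Ioi (1:ℝ) := by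
      have := Vf_mono (mem_Ici.mpr (le_refl 1)) (mem_Ici.mpr (le_of_lt ht)) ht
      rw [Vf_one] at this; exact this
    refine ⟨Vf t, hVt, ?_⟩
    have h1 := (hγp _ hVt).1
    exact Vf_mono.injOn (mem_Ici.mpr (le_of_lt h1)) (mem_Ici.mpr (le_of_lt ht)) (γp_eq hγp hVt)

lemma γm_image (hγm : ∀ E ∈ Set.Ioi (1:ℝ), γm E ∈ Set.Ioo (0:ℝ) 1 ∧
      1 / (γm E) ^ 2 + 2 * Real.log (γm E) = E) :
    γm '' (Set.Ioi 1) = Set.Ioo 0 1 := by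
  apply Set.Subset.antisymm
  · rintro _ ⟨E, hE, rfl⟩; exact (hγm E hE).1
  · intro t ht
    have hVt : Vf t ∈ Set.Ioi (1:ℝ) := by
      have := Vf_anti ⟨ht.1, le_of_lt ht.2⟩ ⟨one_pos, le_refl 1⟩ ht.2
      rw [Vf_one] at this; exact this
    refine ⟨Vf t, hVt, ?_⟩
    have h1 := (hγm _ hVt).1
    exact Vf_anti.injOn ⟨h1.1, le_of_lt h1.2⟩ ⟨ht.1, le_of_lt ht.2⟩ (γm_eq hγm hVt)

lemma γp_contAt (hγp : ∀ E ∈ Set.Ioi (1:ℝ), γp E ∈ Set.Ioi (1:ℝ) ∧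
      1 / (γp E) ^ 2 + 2 * Real.log (γp E) = E) {E₀ : ℝ} (hE₀ : E₀ ∈ Set.Ioi (1:ℝ)) :
    ContinuousAt γp E₀ := by
  apply (γp_smono hγp).continuousAt_of_image_mem_nhds
    (isOpen_Ioi.mem_nhds hE₀)
  rw [γp_image hγp]
  exact isOpen_Ioi.mem_nhds ((hγp E₀ hE₀).1)

lemma γm_contAt (hγm : ∀ E ∈ Set.Ioi (1:ℝ), γm E ∈ Set.Ioo (0:ℝ) 1 ∧
      1 / (γm E) ^ 2 + 2 * Real.log (γm E) = E) {E₀ : ℝ} (hE₀ : E₀ ∈ Set.Ioi (1:ℝ)) :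
    ContinuousAt γm E₀ := by
  have hmono : StrictMonoOn (fun E => -γm E) (Set.Ioi 1) := by
    intro E hE E' hE' h
    simpa using (γm_santi hγm) hE hE' h
  have himg : (fun E => -γm E) '' (Set.Ioi 1) = Set.Ioo (-1) 0 := by
    have : (fun E => -γm E) = (fun x => -x) ∘ γm := rfl
    rw [this, Set.image_comp, γm_image hγm]
    ext x; simp only [Set.mem_image, Set.mem_Ioo]
    constructor
    · rintro ⟨y, hy, rfl⟩; constructor <;> linarith [hy.1, hy.2]
    · intro hx; exact ⟨-x, ⟨by linarith [hx.2], by linarith [hx.1]⟩, by ring⟩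
  have : ContinuousAt (fun E => -γm E) E₀ := by
    apply hmono.continuousAt_of_image_mem_nhds (isOpen_Ioi.mem_nhds hE₀)
    rw [himg]
    apply isOpen_Ioo.mem_nhds
    have := (hγm E₀ hE₀).1
    constructor <;> simp <;> linarith [this.1, this.2]
  have : ContinuousAt (fun E => -(-γm E)) E₀ := this.neg
  simpa using this

end

lemma U_anti : AntitoneOn (fun t => Vf t - (1 - t) ^ 2) (Ioc 0 1) := by
  have hd : ∀ t ∈ interior (Ioc (0:ℝ) 1), HasDerivAt (fun t : ℝ => Vf t - (1 - t) ^ 2)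
      (2 * (t ^ 2 - 1) / t ^ 3 - 2 * (1 - t) ^ 1 * (0 - 1)) t := by
    rw [interior_Ioc]
    intro t ht
    exact (Vf_hasDerivAt ht.1).sub (((hasDerivAt_const t (1:ℝ)).sub (hasDerivAt_id' t)).pow 2)
  apply antitoneOn_of_deriv_nonpos (convex_Ioc 0 1)
  · exact fun t ht => ((Vf_contAt ht.1).sub (by fun_prop)).continuousWithinAt
  · exact fun t ht => (hd t ht).differentiableAt.differentiableWithinAt
  · intro t ht
    rw [(hd t ht).deriv]
    rw [interior_Ioc] at ht
    obtain ⟨ht1, ht2⟩ := ht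
    have h3 : (0:ℝ) < t ^ 3 := pow_pos ht1 3
    have : 2 * (t ^ 2 - 1) / t ^ 3 ≤ -(2 * (1 - t)) := by
      rw [div_le_iff₀ h3]
      have htt : t ^ 3 ≤ t := by nlinarith [mul_nonneg (mul_nonneg ht1.le (by linarith : (0:ℝ) ≤ 1 - t)) (by linarith : (0:ℝ) ≤ 1 + t)]
      nlinarith [mul_nonneg (by linarith : (0:ℝ) ≤ 1 - t) (by linarith : (0:ℝ) ≤ 1 + t - t ^ 3)]
    ring_nf at this ⊢
    linarith

lemma W_mono {B : ℝ} (hB : 1 ≤ B) :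
    MonotoneOn (fun t => Vf t - (t - 1) ^ 2 / B ^ 2) (Icc 1 B) := by
  have hB0 : (0:ℝ) < B := lt_of_lt_of_le one_pos hB
  have hB2 : (0:ℝ) < B ^ 2 := pow_pos hB0 2
  have hd : ∀ t ∈ interior (Icc (1:ℝ) B), HasDerivAt (fun t : ℝ => Vf t - (t - 1) ^ 2 / B ^ 2)
      (2 * (t ^ 2 - 1) / t ^ 3 - 2 * (t - 1) ^ 1 * (1 - 0) / B ^ 2) t := by
    rw [interior_Icc]
    intro t ht
    have ht0 : (0:ℝ) < t := lt_trans one_pos ht.1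
    exact (Vf_hasDerivAt ht0).sub
      ((((hasDerivAt_id' t).sub (hasDerivAt_const t (1:ℝ))).pow 2).div_const (B ^ 2))
  apply monotoneOn_of_deriv_nonneg (convex_Icc 1 B)
  · exact fun t ht => ((Vf_contAt (lt_of_lt_of_le one_pos ht.1)).sub (by fun_prop)).continuousWithinAt
  · exact fun t ht => (hd t ht).differentiableAt.differentiableWithinAt
  · intro t ht
    rw [(hd t ht).deriv]
    rw [interior_Icc] at ht
    obtain ⟨ht1, ht2⟩ := ht
    have ht0 : (0:ℝ) < t := lt_trans one_pos ht1
    have h3 : (0:ℝ) < t ^ 3 := pow_pos ht0 3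
    have : 2 * (t - 1) / B ^ 2 ≤ 2 * (t ^ 2 - 1) / t ^ 3 := by
      rw [div_le_div_iff₀ hB2 h3]
      have h2B : t ^ 2 ≤ B ^ 2 := by nlinarith [ht1, ht2]
      have hin : (0:ℝ) ≤ (t + 1) * B ^ 2 - t ^ 3 := by nlinarith [ht1, h2B]
      nlinarith [mul_nonneg (by linarith [ht1] : (0:ℝ) ≤ t - 1) hin]
    ring_nf at this ⊢
    linarith

lemma key_lemma (γm γp : ℝ → ℝ)
    (hγm : ∀ E ∈ Set.Ioi (1:ℝ), γm E ∈ Set.Ioo (0:ℝ) 1 ∧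
      1 / (γm E) ^ 2 + 2 * Real.log (γm E) = E)
    (hγp : ∀ E ∈ Set.Ioi (1:ℝ), γp E ∈ Set.Ioi (1:ℝ) ∧
      1 / (γp E) ^ 2 + 2 * Real.log (γp E) = E)
    {E₀ : ℝ} (hE₀ : 1 < E₀) :
    ∃ δ > (0:ℝ), ∃ c > (0:ℝ), ∀ E : ℝ, |E - E₀| ≤ δ → 1 < E ∧
      ∀ x ∈ Icc (γm E) (γp E), c * ((x - γm E) * (γp E - x)) ≤ E - Vf x := by
  set E' := (1 + E₀) / 2 with hE'def
  set E₁ := E₀ + 1 with hE₁def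
  have hE'1 : 1 < E' := by rw [hE'def]; linarith
  have hE₁1 : 1 < E₁ := by rw [hE₁def]; linarith
  have hE'mem : E' ∈ Ioi (1:ℝ) := hE'1
  have hE₁mem : E₁ ∈ Ioi (1:ℝ) := hE₁1
  obtain ⟨ha', -⟩ := hγm E' hE'mem
  obtain ⟨hb', -⟩ := hγp E' hE'mem
  obtain ⟨ha₁, -⟩ := hγm E₁ hE₁mem
  obtain ⟨hB, -⟩ := hγp E₁ hE₁mem
  set a' := γm E' with ha'def
  set b' := γp E' with hb'def
  set B := γp E₁ with hBdef
  set a₁ := γm E₁ with ha₁def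
  have hB1 : (1:ℝ) < B := hB
  have hB0 : (0:ℝ) < B := lt_trans one_pos hB1
  have ha'0 : 0 < a' := ha'.1
  have ha'1 : a' < 1 := ha'.2
  have hb'1 : (1:ℝ) < b' := hb'
  refine ⟨min ((E₀ - 1) / 2) 1, lt_min (by linarith) one_pos,
    min ((1 - a') / B) ((b' - 1) / B ^ 3), lt_min (div_pos (by linarith) hB0) (div_pos (by linarith) (by positivity)), ?_⟩
  intro E hE
  obtain ⟨hEa, hEb⟩ := abs_le.mp hE
  have hmin1 := min_le_left ((E₀ - 1) / 2) 1
  have hmin2 := min_le_right ((E₀ - 1) / 2) 1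
  have hEl : E' ≤ E := by rw [hE'def]; linarith
  have hEr : E ≤ E₁ := by rw [hE₁def]; linarith
  have hE1 : 1 < E := lt_of_lt_of_le hE'1 hEl
  refine ⟨hE1, ?_⟩
  have hEmem : E ∈ Ioi (1:ℝ) := hE1
  obtain ⟨haE, -⟩ := hγm E hEmem
  obtain ⟨hbE, -⟩ := hγp E hEmem
  have hVaE : Vf (γm E) = E := γm_eq hγm hEmem
  have hVbE : Vf (γp E) = E := γp_eq hγp hEmem
  set a := γm E with hadef
  set b := γp E with hbdef
  have ha0 : 0 < a := haE.1
  have ha1 : a < 1 := haE.2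
  have hb1 : (1:ℝ) < b := hbE
  have haa' : a ≤ a' := by
    rcases eq_or_lt_of_le hEl with h | h
    · rw [ha'def, hadef, ← h]
    · exact le_of_lt ((γm_santi hγm) hE'mem hEmem h)
  have ha₁a : a₁ ≤ a := by
    rcases eq_or_lt_of_le hEr with h | h
    · rw [ha₁def, hadef, h]
    · exact le_of_lt ((γm_santi hγm) hEmem hE₁mem h)
  have hb'b : b' ≤ b := by
    rcases eq_or_lt_of_le hEl with h | h
    · rw [hb'def, hbdef, ← h]
    · exact le_of_lt ((γp_smono hγp) hE'mem hEmem h)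
  have hbB : b ≤ B := by
    rcases eq_or_lt_of_le hEr with h | h
    · rw [hBdef, hbdef, h]
    · exact le_of_lt ((γp_smono hγp) hEmem hE₁mem h)
  intro x hx
  obtain ⟨hax, hxb⟩ := hx
  have hx0 : 0 < x := lt_of_lt_of_le ha0 hax
  have hxa : 0 ≤ x - a := by linarith
  have hbx : 0 ≤ b - x := by linarith
  have hbxB : b - x ≤ B := by linarith
  have hxaB : x - a ≤ B := by linarith
  rcases le_or_gt x 1 with hx1 | hx1
  · -- left region
    have hU := U_anti (show a ∈ Ioc (0:ℝ) 1 from ⟨ha0, ha1.le⟩)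
      (show x ∈ Ioc (0:ℝ) 1 from ⟨hx0, hx1⟩) hax
    simp only at hU
    have hEV : (1 - a) ^ 2 - (1 - x) ^ 2 ≤ E - Vf x := by
      rw [← hVaE]; linarith
    have h1 : min ((1 - a') / B) ((b' - 1) / B ^ 3) * ((x - a) * (b - x))
        ≤ ((1 - a') / B) * ((x - a) * (b - x)) :=
      mul_le_mul_of_nonneg_right (min_le_left _ _) (mul_nonneg hxa hbx)
    have h2 : ((1 - a') / B) * ((x - a) * (b - x)) ≤ ((1 - a') / B) * ((x - a) * B) := by
      apply mul_le_mul_of_nonneg_left _ (le_of_lt (div_pos (by linarith) hB0))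
      exact mul_le_mul_of_nonneg_left hbxB hxa
    have h3 : ((1 - a') / B) * ((x - a) * B) = (1 - a') * (x - a) := by
      field_simp
    have h4 : (1 - a') * (x - a) ≤ (2 - a - x) * (x - a) :=
      mul_le_mul_of_nonneg_right (by linarith) hxa
    have h5 : (2 - a - x) * (x - a) = (1 - a) ^ 2 - (1 - x) ^ 2 := by ring
    linarith
  · -- right region
    have hW := W_mono hB1.le (show x ∈ Icc (1:ℝ) B from ⟨hx1.le, by linarith⟩)
      (show b ∈ Icc (1:ℝ) B from ⟨hb1.le, hbB⟩) hxb
    simp only at hW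
    have hB2 : (0:ℝ) < B ^ 2 := by positivity
    have hEV : ((b - 1) ^ 2 - (x - 1) ^ 2) / B ^ 2 ≤ E - Vf x := by
      rw [← hVbE]
      have heq : (b - 1) ^ 2 / B ^ 2 - (x - 1) ^ 2 / B ^ 2
          = ((b - 1) ^ 2 - (x - 1) ^ 2) / B ^ 2 := by ring
      linarith
    have h1 : min ((1 - a') / B) ((b' - 1) / B ^ 3) * ((x - a) * (b - x))
        ≤ ((b' - 1) / B ^ 3) * ((x - a) * (b - x)) :=
      mul_le_mul_of_nonneg_right (min_le_right _ _) (mul_nonneg hxa hbx)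
    have h2 : ((b' - 1) / B ^ 3) * ((x - a) * (b - x)) ≤ ((b' - 1) / B ^ 3) * (B * (b - x)) := by
      apply mul_le_mul_of_nonneg_left _ (le_of_lt (div_pos (by linarith) (by positivity)))
      exact mul_le_mul_of_nonneg_right hxaB hbx
    have h3 : ((b' - 1) / B ^ 3) * (B * (b - x)) = ((b' - 1) * (b - x)) / B ^ 2 := by
      field_simp
    have h4 : ((b' - 1) * (b - x)) / B ^ 2 ≤ ((b - 1) ^ 2 - (x - 1) ^ 2) / B ^ 2 := by
      apply (div_le_div_iff_of_pos_right hB2).mpr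
      have h5 : (b + x - 2) * (b - x) = (b - 1) ^ 2 - (x - 1) ^ 2 := by ring
      have hmul : (b' - 1) * (b - x) ≤ (b + x - 2) * (b - x) :=
        mul_le_mul_of_nonneg_right (by linarith) hbx
      linarith [hmul, h5]
    linarith [h1, h2, h3, h4, hEV]

set_option maxHeartbeats 1000000 in
/-- Continuity of the period `T(E) = 2∫_{γ₋(E)}^{γ₊(E)} dx/√(E − 1/x² − 2 ln x)`
with respect to the energy `E ∈ (1,∞)`. -/
theorem stmt_13 (γm γp : ℝ → ℝ)
    (hγm : ∀ E ∈ Set.Ioi (1:ℝ), γm E ∈ Set.Ioo (0:ℝ) 1 ∧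
      1 / (γm E) ^ 2 + 2 * Real.log (γm E) = E)
    (hγp : ∀ E ∈ Set.Ioi (1:ℝ), γp E ∈ Set.Ioi (1:ℝ) ∧
      1 / (γp E) ^ 2 + 2 * Real.log (γp E) = E) :
    ContinuousOn
      (fun E => 2 * ∫ x in (γm E)..(γp E),
        (Real.sqrt (E - 1 / x ^ 2 - 2 * Real.log x))⁻¹)
      (Set.Ioi 1) := by
  -- the substituted integrand
  set F : ℝ → ℝ → ℝ := fun E y =>
    (Real.sqrt (E - Vf ((γp E - γm E) * y + γm E)))⁻¹ with hFdef
  -- Step A : the integral identity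
  have hLpos : ∀ E ∈ Set.Ioi (1:ℝ), 0 < γp E - γm E := by
    intro E hE
    have h1 := (hγm E hE).1
    have h2 := (hγp E hE).1
    have : (1:ℝ) < γp E := h2
    linarith [h1.2]
  have hEq : ∀ E ∈ Set.Ioi (1:ℝ),
      2 * ∫ x in (γm E)..(γp E), (Real.sqrt (E - 1 / x ^ 2 - 2 * Real.log x))⁻¹
      = 2 * ((γp E - γm E) * ∫ y in (0:ℝ)..1, F E y) := by
    intro E hE
    have hL := hLpos E hE
    have hLne : γp E - γm E ≠ 0 := ne_of_gt hL
    have hg : ∀ y : ℝ, F E y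
        = (fun x => (Real.sqrt (E - 1 / x ^ 2 - 2 * Real.log x))⁻¹) ((γp E - γm E) * y + γm E) := by
      intro y
      simp only [hFdef, Vf]
      ring_nf
    have hsub := integral_comp_mul_add
      (fun x => (Real.sqrt (E - 1 / x ^ 2 - 2 * Real.log x))⁻¹) hLne (γm E)
      (a := (0:ℝ)) (b := 1)
    rw [show (γp E - γm E) * 0 + γm E = γm E by ring,
      show (γp E - γm E) * 1 + γm E = γp E by ring] at hsub
    have : ∫ y in (0:ℝ)..1, F E y
        = (γp E - γm E)⁻¹ * ∫ x in (γm E)..(γp E), (Real.sqrt (E - 1 / x ^ 2 - 2 * Real.log x))⁻¹ := by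
      rw [show (∫ y in (0:ℝ)..1, F E y) = ∫ y in (0:ℝ)..1,
        (fun x => (Real.sqrt (E - 1 / x ^ 2 - 2 * Real.log x))⁻¹) ((γp E - γm E) * y + γm E) from
          intervalIntegral.integral_congr (fun y _ => hg y), hsub, smul_eq_mul]
    rw [this]
    field_simp
  -- Step B : continuity of the substituted expression
  have hcont : ContinuousOn
      (fun E => 2 * ((γp E - γm E) * ∫ y in (0:ℝ)..1, F E y)) (Set.Ioi 1) := by
    intro E₀ hE₀
    have hE₀1 : (1:ℝ) < E₀ := hE₀
    obtain ⟨δ, hδ, c, hc, hkey⟩ := key_lemma γm γp hγm hγp hE₀1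
    set δ₂ := min δ ((E₀ - 1) / 2) with hδ₂def
    have hδ₂pos : 0 < δ₂ := lt_min hδ (by linarith)
    set E₂ := E₀ - δ₂ with hE₂def
    have hE₂1 : 1 < E₂ := by
      have := min_le_right δ ((E₀ - 1) / 2)
      rw [hE₂def]; linarith
    have hE₂mem : E₂ ∈ Set.Ioi (1:ℝ) := hE₂1
    set L₀ := γp E₂ - γm E₂ with hL₀def
    have hL₀pos : 0 < L₀ := hLpos E₂ hE₂mem
    -- facts valid for all E with |E - E₀| ≤ δ₂
    have hfacts : ∀ E : ℝ, |E - E₀| ≤ δ₂ → 1 < E ∧ L₀ ≤ γp E - γm E ∧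
        ∀ y ∈ Icc (0:ℝ) 1, c * L₀ ^ 2 * (y * (1 - y))
          ≤ E - Vf ((γp E - γm E) * y + γm E) := by
      intro E hE
      have hEδ : |E - E₀| ≤ δ := le_trans hE (min_le_left _ _)
      obtain ⟨hE1, hkeyE⟩ := hkey E hEδ
      have hEmem : E ∈ Set.Ioi (1:ℝ) := hE1
      have hE₂E : E₂ ≤ E := by
        obtain ⟨h1, -⟩ := abs_le.mp hE
        rw [hE₂def]; linarith
      have hLL : L₀ ≤ γp E - γm E := by
        have h1 : γp E₂ ≤ γp E := by
          rcases eq_or_lt_of_le hE₂E with h | h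
          · rw [h]
          · exact le_of_lt ((γp_smono hγp) hE₂mem hEmem h)
        have h2 : γm E ≤ γm E₂ := by
          rcases eq_or_lt_of_le hE₂E with h | h
          · rw [h]
          · exact le_of_lt ((γm_santi hγm) hE₂mem hEmem h)
        rw [hL₀def]; linarith
      refine ⟨hE1, hLL, ?_⟩
      intro y hy
      obtain ⟨hy0, hy1⟩ := hy
      set L := γp E - γm E with hLdef
      have hL : 0 < L := hLpos E hEmem
      set x := L * y + γm E with hxdef
      have hx1 : x - γm E = L * y := by rw [hxdef]; ring
      have hx2 : γp E - x = L * (1 - y) := by rw [hxdef, hLdef]; ring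
      have hxmem : x ∈ Icc (γm E) (γp E) := by
        constructor
        · nlinarith
        · nlinarith
      have hK := hkeyE x hxmem
      rw [hx1, hx2] at hK
      have : c * L₀ ^ 2 * (y * (1 - y)) ≤ c * (L * y * (L * (1 - y))) := by
        have hyy : 0 ≤ y * (1 - y) := mul_nonneg hy0 (by linarith)
        have hLL2 : L₀ ^ 2 * (y * (1 - y)) ≤ L ^ 2 * (y * (1 - y)) := by
          apply mul_le_mul_of_nonneg_right _ hyy
          nlinarith
        calc c * L₀ ^ 2 * (y * (1 - y)) = c * (L₀ ^ 2 * (y * (1 - y))) := by ring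
          _ ≤ c * (L ^ 2 * (y * (1 - y))) := mul_le_mul_of_nonneg_left hLL2 hc.le
          _ = c * (L * y * (L * (1 - y))) := by ring
      linarith
    -- the dominating function
    set C := (Real.sqrt (c * L₀ ^ 2 / 2))⁻¹ with hCdef
    have hCpos : 0 < C := by
      rw [hCdef]
      have : 0 < Real.sqrt (c * L₀ ^ 2 / 2) := Real.sqrt_pos.mpr (by positivity)
      positivity
    set bound : ℝ → ℝ := fun y => C * ((Real.sqrt y)⁻¹ + (Real.sqrt (1 - y))⁻¹) with hbdef
    -- pointwise bound
    have hptwise : ∀ E : ℝ, |E - E₀| ≤ δ₂ → ∀ y ∈ Ioc (0:ℝ) 1, ‖F E y‖ ≤ bound y := by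
      intro E hE y hy
      obtain ⟨hE1, hLL, hkeyE⟩ := hfacts E hE
      have hFnn : 0 ≤ F E y := by
        rw [hFdef]
        positivity
      rw [Real.norm_eq_abs, abs_of_nonneg hFnn]
      have hboundnn : ∀ z : ℝ, 0 ≤ C * ((Real.sqrt z)⁻¹ + (Real.sqrt (1 - z))⁻¹) := by
        intro z
        have := Real.sqrt_nonneg z
        have := Real.sqrt_nonneg (1 - z)
        positivity
      rcases eq_or_lt_of_le hy.2 with h1 | h1
      · -- y = 1
        have : F E 1 = 0 := by
          have hVp : Vf (γp E) = E := by
            simpa [Vf] using (hγp E (show E ∈ Set.Ioi (1:ℝ) from hE1)).2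
          rw [hFdef]
          simp only
          rw [show (γp E - γm E) * 1 + γm E = γp E by ring, hVp]
          simp
        rw [h1, this]
        exact hboundnn 1
      · -- y < 1
        have hkk := hkeyE y ⟨hy.1.le, hy.2⟩
        have hyy : 0 < y * (1 - y) := mul_pos hy.1 (by linarith)
        have hpos : 0 < c * L₀ ^ 2 * (y * (1 - y)) := by positivity
        have hFle : F E y ≤ (Real.sqrt (c * L₀ ^ 2 * (y * (1 - y))))⁻¹ := by
          rw [hFdef]
          simp only
          apply inv_anti₀ (Real.sqrt_pos.mpr hpos)
          exact Real.sqrt_le_sqrt (by linarith)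
        have hcL : 0 < c * L₀ ^ 2 := mul_pos hc (pow_pos hL₀pos 2)
        rcases le_or_gt y (1/2) with h2 | h2
        · -- y ≤ 1/2 : use (√y)⁻¹ term
          have hstep : (Real.sqrt (c * L₀ ^ 2 * (y * (1 - y))))⁻¹
              ≤ (Real.sqrt (c * L₀ ^ 2 / 2 * y))⁻¹ := by
            apply inv_anti₀ (Real.sqrt_pos.mpr (mul_pos (by positivity) hy.1))
            apply Real.sqrt_le_sqrt
            nlinarith [mul_nonneg (mul_nonneg hcL.le hy.1.le) (by linarith : (0:ℝ) ≤ 1/2 - y)]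
          have heq : (Real.sqrt (c * L₀ ^ 2 / 2 * y))⁻¹ = C * (Real.sqrt y)⁻¹ := by
            rw [Real.sqrt_mul (by positivity) y, mul_inv, hCdef]
          have hfin : C * (Real.sqrt y)⁻¹ ≤ bound y := by
            rw [hbdef]
            have h3 : 0 ≤ (Real.sqrt (1 - y))⁻¹ := by positivity
            nlinarith
          linarith
        · -- y > 1/2 : use (√(1-y))⁻¹ term
          have hstep : (Real.sqrt (c * L₀ ^ 2 * (y * (1 - y))))⁻¹
              ≤ (Real.sqrt (c * L₀ ^ 2 / 2 * (1 - y)))⁻¹ := by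
            apply inv_anti₀ (Real.sqrt_pos.mpr (mul_pos (by positivity) (by linarith)))
            apply Real.sqrt_le_sqrt
            nlinarith [mul_nonneg (mul_nonneg hcL.le (by linarith : (0:ℝ) ≤ 1 - y)) (by linarith : (0:ℝ) ≤ y - 1/2)]
          have heq : (Real.sqrt (c * L₀ ^ 2 / 2 * (1 - y)))⁻¹ = C * (Real.sqrt (1 - y))⁻¹ := by
            rw [Real.sqrt_mul (by positivity) (1 - y), mul_inv, hCdef]
          have hfin : C * (Real.sqrt (1 - y))⁻¹ ≤ bound y := by
            rw [hbdef]
            have h3 : 0 ≤ (Real.sqrt y)⁻¹ := by positivity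
            nlinarith
          linarith
    -- integrability of the bound
    have hbint : IntervalIntegrable bound volume 0 1 := by
      have i1 : IntervalIntegrable (fun y : ℝ => (Real.sqrt y)⁻¹) volume 0 1 := by
        apply IntervalIntegrable.mono_fun' (g := fun y : ℝ => y ^ (-(1/2) : ℝ))
          (intervalIntegrable_rpow' (by norm_num))
        · exact (Real.continuous_sqrt.measurable.inv).aestronglyMeasurable
        · rw [Filter.EventuallyLE, ae_restrict_iff' measurableSet_uIoc]
          apply Filter.Eventually.of_forall
          intro y hy
          rw [uIoc_of_le (by norm_num : (0:ℝ) ≤ 1)] at hy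
          rw [Real.norm_eq_abs, abs_of_nonneg (by positivity)]
          rw [Real.sqrt_eq_rpow, ← Real.rpow_neg hy.1.le]
      have i2 : IntervalIntegrable (fun y : ℝ => (Real.sqrt (1 - y))⁻¹) volume 0 1 := by
        have := (i1.comp_sub_left 1).symm
        simpa using this
      rw [hbdef]
      exact (i1.add i2).const_mul C
    -- measurability
    have hmeas : ∀ E : ℝ, |E - E₀| ≤ δ₂ → E ∈ Set.Ioi (1:ℝ) →
        AEStronglyMeasurable (F E) (volume.restrict (Ι (0:ℝ) 1)) := by
      intro E hE hE1
      have hγm0 : 0 < γm E := ((hγm E hE1).1).1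
      have hL : 0 < γp E - γm E := hLpos E hE1
      have hinner : ContinuousOn (fun y => E - Vf ((γp E - γm E) * y + γm E)) (Ι (0:ℝ) 1) := by
        rw [uIoc_of_le (by norm_num : (0:ℝ) ≤ 1)]
        intro y hy
        have hx : 0 < (γp E - γm E) * y + γm E := by nlinarith [hy.1]
        have haff : ContinuousAt (fun t : ℝ => (γp E - γm E) * t + γm E) y := by fun_prop
        exact continuousWithinAt_const.sub (((Vf_contAt hx).comp (f := fun t : ℝ => (γp E - γm E) * t + γm E) haff).continuousWithinAt)
      have h1 : ContinuousOn (fun y => Real.sqrt (E - Vf ((γp E - γm E) * y + γm E)))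
          (Ι (0:ℝ) 1) := Real.continuous_sqrt.comp_continuousOn hinner
      exact ((h1.aemeasurable measurableSet_uIoc).inv).aestronglyMeasurable
    -- eventually in the δ₂-ball
    have hevδ : ∀ᶠ E in nhdsWithin E₀ (Set.Ioi 1), |E - E₀| ≤ δ₂ := by
      apply nhdsWithin_le_nhds
      filter_upwards [Metric.closedBall_mem_nhds E₀ hδ₂pos] with E hE
      simpa [Metric.mem_closedBall, Real.dist_eq] using hE
    -- continuity in E for a.e. y
    have hae1 : ∀ᵐ y : ℝ, y ≠ 1 := by
      refine MeasureTheory.ae_iff.mpr ?_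
      simp only [ne_eq, not_not, Set.setOf_eq_eq_singleton]
      exact Real.volume_singleton
    have h_cont : ∀ᵐ y : ℝ, y ∈ Ι (0:ℝ) 1 →
        ContinuousWithinAt (fun E => F E y) (Set.Ioi 1) E₀ := by
      filter_upwards [hae1] with y hy1 hy
      rw [uIoc_of_le (by norm_num : (0:ℝ) ≤ 1)] at hy
      have hyo : y ∈ Ioo (0:ℝ) 1 := ⟨hy.1, lt_of_le_of_ne hy.2 hy1⟩
      have hγmc : ContinuousWithinAt γm (Set.Ioi 1) E₀ := (γm_contAt hγm hE₀).continuousWithinAt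
      have hγpc : ContinuousWithinAt γp (Set.Ioi 1) E₀ := (γp_contAt hγp hE₀).continuousWithinAt
      have hγm0 : 0 < γm E₀ := ((hγm E₀ hE₀).1).1
      have hL : 0 < γp E₀ - γm E₀ := hLpos E₀ hE₀
      have hx₀ : 0 < (γp E₀ - γm E₀) * y + γm E₀ := by nlinarith [hyo.1]
      have hinner : ContinuousWithinAt (fun E => E - Vf ((γp E - γm E) * y + γm E))
          (Set.Ioi 1) E₀ := by
        apply ContinuousWithinAt.sub continuousWithinAt_id
        have haff : ContinuousWithinAt (fun E => (γp E - γm E) * y + γm E) (Set.Ioi 1) E₀ :=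
          ((hγpc.sub hγmc).mul continuousWithinAt_const).add hγmc
        exact (Vf_contAt hx₀).comp_continuousWithinAt (f := fun E => (γp E - γm E) * y + γm E) haff
      have hpos₀ : 0 < E₀ - Vf ((γp E₀ - γm E₀) * y + γm E₀) := by
        obtain ⟨-, -, hk⟩ := hfacts E₀ (by simpa using hδ₂pos.le)
        have := hk y ⟨hyo.1.le, hyo.2.le⟩
        have hyy : 0 < y * (1 - y) := mul_pos hyo.1 (by linarith [hyo.2])
        nlinarith [mul_pos hc (pow_pos hL₀pos 2)]
      have hs : ContinuousWithinAt
          (fun E => Real.sqrt (E - Vf ((γp E - γm E) * y + γm E))) (Set.Ioi 1) E₀ :=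
        Real.continuous_sqrt.continuousAt.comp_continuousWithinAt hinner
      exact hs.inv₀ (ne_of_gt (Real.sqrt_pos.mpr hpos₀))
    -- apply dominated convergence
    have hF_meas : ∀ᶠ E in nhdsWithin E₀ (Set.Ioi 1),
        AEStronglyMeasurable (F E) (volume.restrict (Ι (0:ℝ) 1)) := by
      filter_upwards [hevδ, self_mem_nhdsWithin] with E h1 h2
      exact hmeas E h1 h2
    have h_bound : ∀ᶠ E in nhdsWithin E₀ (Set.Ioi 1),
        ∀ᵐ y : ℝ, y ∈ Ι (0:ℝ) 1 → ‖F E y‖ ≤ bound y := by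
      filter_upwards [hevδ] with E hE
      apply Filter.Eventually.of_forall
      intro y hy
      rw [uIoc_of_le (by norm_num : (0:ℝ) ≤ 1)] at hy
      exact hptwise E hE y hy
    have hI : ContinuousWithinAt (fun E => ∫ y in (0:ℝ)..1, F E y) (Set.Ioi 1) E₀ :=
      intervalIntegral.continuousWithinAt_of_dominated_interval hF_meas h_bound hbint h_cont
    have hγmc : ContinuousWithinAt γm (Set.Ioi 1) E₀ := (γm_contAt hγm hE₀).continuousWithinAt
    have hγpc : ContinuousWithinAt γp (Set.Ioi 1) E₀ := (γp_contAt hγp hE₀).continuousWithinAt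
    exact continuousWithinAt_const.mul ((hγpc.sub hγmc).mul hI)
  exact hcont.congr hEq
end

section
/- For E > 1, let γ₊(E) ∈ (1,∞) solve 1/q² + 2·ln q = E. Then ∫₁^{γ₊(E)} dx / √(E − 1/x² − 2·ln x) ≥ γ₊(E) · ∫_{1/γ₊(E)}^{1} dy / √(−2·ln y). -/
/-!
With `V q = 1 / q ^ 2 + 2 log q` (`potential`), the substitution `y = x / γ₊` turns the left-hand
side into `∫₁^{γ₊} dx / √(2 log γ₊ - 2 log x)`, while the right-hand integrand is
`1 / √(V γ₊ - V x)`. As `1 / x ^ 2 ≥ 1 / γ₊ ^ 2` on `[1, γ₊]`, `V γ₊ - V x ≤ 2 log γ₊ - 2 log x`,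
which compares the integrands pointwise. Both integrands are `O((γ₊ - x) ^ (-1/2))`, hence
integrable, since `V' t = 2 (t ^ 2 - 1) / t ^ 3 ≥ 4 (t - 1) / γ₊ ^ 3` on `[1, γ₊]` gives
`V γ₊ - V x ≥ 2 (γ₊ - 1) / γ₊ ^ 3 · (γ₊ - x)`.
-/

open MeasureTheory Set Real

noncomputable def potential (t : ℝ) : ℝ := 1 / t ^ 2 + 2 * log t

lemma measurable_potential : Measurable potential := by
  unfold potential
  fun_prop

lemma hasDerivAt_potential {x : ℝ} (hx : x ≠ 0) :
    HasDerivAt potential (2 / x - 2 / x ^ 3) x :=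
  (((hasDerivAt_const x 1).div (hasDerivAt_pow 2 x) (pow_ne_zero 2 hx)).add
    ((hasDerivAt_log hx).const_mul 2)).congr_deriv (by field_simp; ring)

lemma monotoneOn_potential_sub_sq (g : ℝ) :
    MonotoneOn (fun t => potential t - 2 * (t - 1) ^ 2 / g ^ 3) (Icc 1 g) := by
  have hderiv (x : ℝ) (hx : x ≠ 0) : HasDerivAt (fun t => potential t - 2 * (t - 1) ^ 2 / g ^ 3)
      (2 / x - 2 / x ^ 3 - 4 * (x - 1) / g ^ 3) x := by
    refine (hasDerivAt_potential hx).sub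
      (((((hasDerivAt_id x).sub_const 1).pow 2).const_mul 2).div_const (g ^ 3) |>.congr_deriv ?_)
    simp only [Nat.cast_ofNat, id_eq, Nat.add_one_sub_one, pow_one, mul_one]
    ring
  refine monotoneOn_of_deriv_nonneg (convex_Icc 1 g) ?_ ?_ ?_
  · exact fun x hx => (hderiv x (by linarith [hx.1])).continuousAt.continuousWithinAt
  · rw [interior_Icc]
    exact fun x hx => (hderiv x (by linarith [hx.1])).differentiableAt.differentiableWithinAt
  · rw [interior_Icc]
    rintro x ⟨hx1, hxg⟩
    rw [(hderiv x (by linarith)).deriv, sub_nonneg]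
    have hx3 : 0 < x ^ 3 := by positivity
    calc 4 * (x - 1) / g ^ 3 ≤ 4 * (x - 1) / x ^ 3 :=
          div_le_div_of_nonneg_left (by linarith) hx3 (by gcongr)
      _ ≤ 2 * (x - 1) * (x + 1) / x ^ 3 := div_le_div_of_nonneg_right (by nlinarith) hx3.le
      _ = 2 / x - 2 / x ^ 3 := by field_simp; ring

lemma mul_sub_le_potential_sub {g x : ℝ} (hx : 1 ≤ x) (hxg : x ≤ g) :
    2 * (g - 1) / g ^ 3 * (g - x) ≤ potential g - potential x := by
  have hmono := monotoneOn_potential_sub_sq g ⟨hx, hxg⟩ ⟨hx.trans hxg, le_rfl⟩ hxg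
  have hg3 : 0 < g ^ 3 := pow_pos (by linarith) 3
  -- `(g - 1) ^ 2 - (x - 1) ^ 2 = (g - x) (g + x - 2) ≥ (g - x) (g - 1)`
  have : 2 * (g - 1) / g ^ 3 * (g - x) ≤ 2 * (g - 1) ^ 2 / g ^ 3 - 2 * (x - 1) ^ 2 / g ^ 3 := by
    rw [div_mul_eq_mul_div, ← sub_div]
    exact div_le_div_of_nonneg_right (by nlinarith) hg3.le
  simp only at hmono
  linarith

lemma potential_sub_le_log_sub {g x : ℝ} (hx : 0 < x) (hxg : x ≤ g) :
    potential g - potential x ≤ 2 * log g - 2 * log x := by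
  have : 1 / g ^ 2 ≤ 1 / x ^ 2 := one_div_le_one_div_of_le (by positivity) (by gcongr)
  unfold potential
  linarith

lemma intervalIntegrable_inv_sqrt_of_mul_sub_le {f : ℝ → ℝ} {a b c : ℝ} (hf : Measurable f)
    (hab : a ≤ b) (hc : 0 < c) (h : ∀ x ∈ Ioo a b, c * (b - x) ≤ f x) :
    IntervalIntegrable (fun x => (√(f x))⁻¹) volume a b := by
  have hdom : IntervalIntegrable (fun x => (√c)⁻¹ * (b - x) ^ (-(1 / 2) : ℝ)) volume a b := by
    have hrpow := intervalIntegral.intervalIntegrable_rpow' (a := b - a) (b := b - b)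
      (by norm_num : (-1 : ℝ) < -(1 / 2))
    simpa using (hrpow.comp_sub_left b).const_mul (√c)⁻¹
  refine hdom.mono_fun (continuous_sqrt.measurable.comp hf).inv.aestronglyMeasurable ?_
  rw [uIoc_of_le hab, ← Measure.restrict_congr_set Ioo_ae_eq_Ioc]
  filter_upwards [ae_restrict_mem measurableSet_Ioo] with x hx
  have hbx : 0 < b - x := sub_pos.2 hx.2
  rw [norm_of_nonneg (by positivity), norm_of_nonneg (by positivity)]
  calc (√(f x))⁻¹ ≤ (√(c * (b - x)))⁻¹ :=
        inv_anti₀ (sqrt_pos.2 (mul_pos hc hbx)) (sqrt_le_sqrt (h x hx))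
    _ = (√c)⁻¹ * (b - x) ^ (-(1 / 2) : ℝ) := by
      rw [sqrt_mul hc.le, mul_inv, rpow_neg hbx.le, ← sqrt_eq_rpow]

lemma mul_integral_inv_sqrt_neg_log {g : ℝ} (hg : 0 < g) :
    g * ∫ y in (1 / g)..1, (√(-2 * log y))⁻¹ =
      ∫ x in (1 : ℝ)..g, (√(2 * log g - 2 * log x))⁻¹ := by
  have h := intervalIntegral.integral_comp_div (a := 1) (b := g)
    (fun y => (√(-2 * log y))⁻¹) hg.ne'
  rw [div_self hg.ne', smul_eq_mul] at h
  rw [← h]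
  refine intervalIntegral.integral_congr fun x hx => ?_
  have hx0 : 0 < x := (lt_min one_pos hg).trans_le hx.1
  simp only [log_div hx0.ne' hg.ne']
  ring_nf

theorem stmt_16_general (E g : ℝ) (hg : 1 < g)
    (hroot : 1 / g ^ 2 + 2 * Real.log g = E) :
    g * ∫ y in (1/g)..1, (Real.sqrt (-2 * Real.log y))⁻¹ ≤
      ∫ x in (1:ℝ)..g, (Real.sqrt (E - 1 / x ^ 2 - 2 * Real.log x))⁻¹ := by
  subst hroot
  have hV (x : ℝ) : 1 / g ^ 2 + 2 * log g - 1 / x ^ 2 - 2 * log x = potential g - potential x := by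
    unfold potential; ring
  simp_rw [hV]
  rw [mul_integral_inv_sqrt_neg_log (by linarith)]
  have hc : 0 < 2 * (g - 1) / g ^ 3 := div_pos (by linarith) (pow_pos (by linarith) 3)
  have hlin (x : ℝ) (hx : x ∈ Ioo 1 g) :
      2 * (g - 1) / g ^ 3 * (g - x) ≤ potential g - potential x :=
    mul_sub_le_potential_sub hx.1.le hx.2.le
  have hlog (x : ℝ) (hx : x ∈ Ioo 1 g) : potential g - potential x ≤ 2 * log g - 2 * log x :=
    potential_sub_le_log_sub (by linarith [hx.1]) hx.2.le
  refine intervalIntegral.integral_mono_on_of_le_Ioo hg.le ?_ ?_ fun x hx => ?_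
  · exact intervalIntegrable_inv_sqrt_of_mul_sub_le (by fun_prop) hg.le hc
      fun x hx => (hlin x hx).trans (hlog x hx)
  · exact intervalIntegrable_inv_sqrt_of_mul_sub_le (measurable_const.sub measurable_potential)
      hg.le hc hlin
  · exact inv_anti₀ (sqrt_pos.2 ((mul_pos hc (sub_pos.2 hx.2)).trans_le (hlin x hx)))
      (sqrt_le_sqrt (hlog x hx))

/-- Lower bound for the main part of the period integral:
`∫₁^{γ₊} dx/√(E − 1/x² − 2 ln x) ≥ γ₊ ∫_{1/γ₊}^1 dy/√(−2 ln y)`. -/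
theorem stmt_16 (E g : ℝ) (hE : 1 < E) (hg : 1 < g)
    (hroot : 1 / g ^ 2 + 2 * Real.log g = E) :
    g * ∫ y in (1/g)..1, (Real.sqrt (-2 * Real.log y))⁻¹ ≤
      ∫ x in (1:ℝ)..g, (Real.sqrt (E - 1 / x ^ 2 - 2 * Real.log x))⁻¹ :=
  stmt_16_general E g hg hroot
end

section
/- For E > 1, let γ₊(E) ∈ (1,∞) solve 1/q² + 2·ln q = E and set y₊ := ln γ₊(E). Then ∫₁^{γ₊(E)} dx / √(E − 1/x² − 2·ln x) ≤ (γ₊(E) / √(2 − (1 − e^{−2y₊})/y₊)) · ∫₀^{y₊} e^{−z} dz / √z. -/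
/-!
Write `y₊ = log γ₊` and `V y = e^{-2y} + 2y`, so that `E = V y₊` and the integrand is
`(V y₊ - V (log x))^{-1/2}`. Convexity puts `e^{-2y}` below its chord on `[0, y₊]`, whence
`V y₊ - V y ≥ k (y₊ - y)` with `k = 2 - (1 - e^{-2y₊}) / y₊ > 0`. The substitution `x = γ₊ e^{-z}`
turns `∫₁^{γ₊} dx / √(k (y₊ - log x))` into `(γ₊ / √k) ∫₀^{y₊} e^{-z} / √z dz`.
-/

open MeasureTheory Set Real

section ChangeOfVariables

variable {E : Type*} [NormedAddCommGroup E] [NormedSpace ℝ E]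

theorem integral_exp_comp_of_le (f : ℝ → E) {a b : ℝ} (hab : a ≤ b) :
    ∫ x in exp a..exp b, f x = ∫ y in a..b, exp y • f (exp y) := by
  rw [intervalIntegral.integral_of_le (exp_le_exp.2 hab), intervalIntegral.integral_of_le hab,
    integral_Ioc_eq_integral_Ioo, integral_Ioc_eq_integral_Ioo, ← image_exp_Ioo,
    integral_image_eq_integral_abs_deriv_smul measurableSet_Ioo
      (fun y _ => (hasDerivAt_exp y).hasDerivWithinAt) exp_injective.injOn]
  simp only [abs_of_pos (exp_pos _)]

theorem integral_exp_comp (f : ℝ → E) (a b : ℝ) :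
    ∫ x in exp a..exp b, f x = ∫ y in a..b, exp y • f (exp y) := by
  rcases le_total a b with hab | hba
  · exact integral_exp_comp_of_le f hab
  · rw [intervalIntegral.integral_symm, integral_exp_comp_of_le f hba,
      intervalIntegral.integral_symm, neg_neg]

theorem integral_one_exp_eq_integral_exp_sub (f : ℝ → E) (L : ℝ) :
    ∫ x in 1..exp L, f x = ∫ z in 0..L, exp (L - z) • f (exp (L - z)) := by
  rw [← exp_zero, integral_exp_comp, intervalIntegral.integral_comp_sub_left
    (fun y => exp y • f (exp y)), sub_self, sub_zero]

end ChangeOfVariables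

theorem intervalIntegrable_exp_neg_div_sqrt {L : ℝ} (hL : 0 ≤ L) :
    IntervalIntegrable (fun z => exp (-z) / √z) volume 0 L := by
  have hrpow : IntervalIntegrable (fun z : ℝ => exp (-z) * z ^ (-(1 / 2) : ℝ)) volume 0 L :=
    (intervalIntegral.intervalIntegrable_rpow' (by norm_num)).continuousOn_mul
      (by fun_prop)
  refine hrpow.congr fun z hz => ?_
  rw [uIoc_of_le hL] at hz
  simp only [rpow_neg hz.1.le, sqrt_eq_rpow, div_eq_mul_inv]

theorem one_div_exp_sq (y : ℝ) : 1 / exp y ^ 2 = exp (-2 * y) := by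
  rw [one_div, ← exp_nat_mul, ← exp_neg]
  ring_nf

theorem exp_mul_le_chord {a L y : ℝ} (hL : 0 < L) (hy₀ : 0 ≤ y) (hyL : y ≤ L) :
    exp (a * y) ≤ 1 + y / L * (exp (a * L) - 1) := by
  have h := convexOn_exp.2 (mem_univ 0) (mem_univ (a * L)) (div_nonneg (sub_nonneg.2 hyL) hL.le)
    (div_nonneg hy₀ hL.le) (by field_simp; ring)
  simp only [smul_eq_mul, mul_zero, zero_add, exp_zero, mul_one] at h
  rwa [show y / L * (a * L) = a * y by field_simp,
    show (L - y) / L + y / L * exp (a * L) = 1 + y / L * (exp (a * L) - 1) by field_simp; ring] at h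

theorem one_sub_exp_neg_two_mul_div_lt_two {L : ℝ} (hL : 0 < L) :
    (1 - exp (-2 * L)) / L < 2 := by
  rw [div_lt_iff₀ hL]
  linarith [add_one_lt_exp (x := -2 * L) (by linarith)]

theorem mul_sub_le_exp_neg_two_mul_sub {L y : ℝ} (hL : 0 < L) (hy₀ : 0 ≤ y) (hyL : y ≤ L) :
    (2 - (1 - exp (-2 * L)) / L) * (L - y) ≤ exp (-2 * L) + 2 * L - exp (-2 * y) - 2 * y := by
  have h := exp_mul_le_chord (a := -2) hL hy₀ hyL
  have hchord : (2 - (1 - exp (-2 * L)) / L) * (L - y)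
      = exp (-2 * L) + 2 * L - (1 + y / L * (exp (-2 * L) - 1)) - 2 * y := by
    field_simp; ring
  linarith

theorem inv_sqrt_exp_gap_le {L z : ℝ} (hL : 0 < L) (hz : z ∈ Ioc 0 L) :
    (√(exp (-2 * L) + 2 * L - exp (-2 * (L - z)) - 2 * (L - z)))⁻¹
      ≤ (√(2 - (1 - exp (-2 * L)) / L))⁻¹ * (√z)⁻¹ := by
  have hk : 0 < 2 - (1 - exp (-2 * L)) / L := sub_pos.2 (one_sub_exp_neg_two_mul_div_lt_two hL)
  rw [← mul_inv, ← sqrt_mul hk.le]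
  refine inv_anti₀ (sqrt_pos.2 (mul_pos hk hz.1)) (sqrt_le_sqrt ?_)
  simpa only [sub_sub_cancel] using
    mul_sub_le_exp_neg_two_mul_sub (y := L - z) hL (sub_nonneg.2 hz.2) (by linarith [hz.1])

theorem stmt_17_general (E g : ℝ) (hg : 1 < g)
    (hroot : 1 / g ^ 2 + 2 * Real.log g = E) :
    (∫ x in (1:ℝ)..g, (Real.sqrt (E - 1 / x ^ 2 - 2 * Real.log x))⁻¹) ≤
      (g / Real.sqrt (2 - (1 - Real.exp (-2 * Real.log g)) / Real.log g)) *
        ∫ z in (0:ℝ)..(Real.log g), Real.exp (-z) / Real.sqrt z := by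
  obtain ⟨L, rfl⟩ : ∃ L, exp L = g := ⟨log g, exp_log (by linarith)⟩
  have hL : 0 < L := one_lt_exp_iff.1 hg
  simp only [log_exp, one_div_exp_sq] at hroot ⊢
  subst hroot
  rw [integral_one_exp_eq_integral_exp_sub, ← intervalIntegral.integral_const_mul,
    intervalIntegral.integral_of_le hL.le, intervalIntegral.integral_of_le hL.le]
  refine setIntegral_mono_of_nonneg (fun z _ => by positivity) (fun z hz => ?_)
    (((intervalIntegrable_exp_neg_div_sqrt hL.le).const_mul _).1)
  have hexp : exp (L - z) = exp L * exp (-z) := by rw [sub_eq_add_neg, exp_add]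
  rw [smul_eq_mul, log_exp, one_div_exp_sq, hexp]
  calc exp L * exp (-z) * (√(exp (-2 * L) + 2 * L - exp (-2 * (L - z)) - 2 * (L - z)))⁻¹
      ≤ exp L * exp (-z) * ((√(2 - (1 - exp (-2 * L)) / L))⁻¹ * (√z)⁻¹) := by
        gcongr
        exact inv_sqrt_exp_gap_le hL hz
    _ = _ := by ring

/-- Upper bound for the main part of the period integral: with `y₊ = ln γ₊`,
`∫₁^{γ₊} dx/√(E − 1/x² − 2 ln x)
  ≤ (γ₊/√(2 − (1 − e^{−2y₊})/y₊)) ∫₀^{y₊} e^{−z}/√z dz`. -/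
theorem stmt_17 (E g : ℝ) (hE : 1 < E) (hg : 1 < g)
    (hroot : 1 / g ^ 2 + 2 * Real.log g = E) :
    (∫ x in (1:ℝ)..g, (Real.sqrt (E - 1 / x ^ 2 - 2 * Real.log x))⁻¹) ≤
      (g / Real.sqrt (2 - (1 - Real.exp (-2 * Real.log g)) / Real.log g)) *
        ∫ z in (0:ℝ)..(Real.log g), Real.exp (-z) / Real.sqrt z :=
  stmt_17_general E g hg hroot
end
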